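/- arXiv:0812.0433 — 5 statements merged into one kernel-verified Lean document; each statement's English description precedes it below -/
import Mathlib

section
/- Let V be a symmetric, multilinear (with respect to a commutative semigroup operation +), nonnegative function on n-tuples of elements of a cone C satisfying the Alexandrov–Fenchel inequality. Fix Δ_{m+1},…,Δₙ ∈ C and define F(Δ) = V(m*Δ, Δ_{m+1},…,Δₙ)^{1/m}. Then F is superadditive (concave in the Brunn–Minkowski sense): F(Δ₁) + F(Δ₂) ≤ F(Δ₁ + Δ₂) for all Δ₁, Δ₂ ∈ C. -/
open Multiset

/-- Generalized Brunn–Minkowski inequality. Let `C` be a commutative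
(additive) semigroup and `V` a nonnegative symmetric function on `n`-multisets from `C`
(symmetry built in by using multisets), additive in each argument and satisfying the
Alexandrov–Fenchel inequality. Fix a multiset `t` of `n - m` elements and set
`F(Δ) = V(m*Δ, t)^{1/m}`. Then `F(Δ₁) + F(Δ₂) ≤ F(Δ₁ + Δ₂)`. -/
theorem generalized_brunn_minkowski
    (C : Type*) [AddCommSemigroup C] (n : ℕ) (V : Multiset C → ℝ)
    (hnonneg : ∀ s : Multiset C, s.card = n → 0 ≤ V s)
    (hadd : ∀ (x y : C) (s : Multiset C), s.card = n - 1 →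
      V ((x + y) ::ₘ s) = V (x ::ₘ s) + V (y ::ₘ s))
    (hAF : ∀ (x y : C) (s : Multiset C), s.card = n - 2 →
      V (x ::ₘ x ::ₘ s) * V (y ::ₘ y ::ₘ s) ≤ (V (x ::ₘ y ::ₘ s)) ^ 2)
    (m : ℕ) (hm2 : 2 ≤ m) (hmn : m ≤ n)
    (t : Multiset C) (ht : t.card = n - m)
    (Δ₁ Δ₂ : C) :
    (V (Multiset.replicate m Δ₁ + t)) ^ ((1 : ℝ) / m) +
      (V (Multiset.replicate m Δ₂ + t)) ^ ((1 : ℝ) / m) ≤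
      (V (Multiset.replicate m (Δ₁ + Δ₂) + t)) ^ ((1 : ℝ) / m) := by
  set Δ := Δ₁ + Δ₂ with hΔ
  set c : ℕ → ℕ → ℝ := fun i j =>
    V (replicate i Δ₁ + (replicate j Δ₂ + (replicate (m - i - j) Δ + t))) with hcdef
  have hcard : ∀ i j : ℕ, i + j ≤ m →
      (replicate i Δ₁ + (replicate j Δ₂ + (replicate (m - i - j) Δ + t))).card = n := by
    intro i j h
    simp [ht]
    omega
  have hc0 : ∀ i j : ℕ, i + j ≤ m → 0 ≤ c i j := by
    intro i j h
    exact hnonneg _ (hcard i j h)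
  -- Pascal recursion
  have pascal : ∀ i j : ℕ, i + j < m → c i j = c (i+1) j + c i (j+1) := by
    intro i j hij
    set S := replicate i Δ₁ + (replicate j Δ₂ + (replicate (m - i - j - 1) Δ + t)) with hS
    have hSc : S.card = n - 1 := by simp [hS, ht]; omega
    have e0 : c i j = V (Δ ::ₘ S) := by
      show V _ = _
      rw [show m - i - j = (m - i - j - 1) + 1 from by omega]
      simp only [hS, replicate_succ, Multiset.cons_add, Multiset.add_cons]
    have e1 : c (i+1) j = V (Δ₁ ::ₘ S) := by
      have h1 : m - (i+1) - j = m - i - j - 1 := by omega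
      simp only [hcdef, h1, hS, replicate_succ, Multiset.cons_add, Multiset.add_cons]
    have e2 : c i (j+1) = V (Δ₂ ::ₘ S) := by
      have h2 : m - i - (j+1) = m - i - j - 1 := by omega
      simp only [hcdef, h2, hS, replicate_succ, Multiset.cons_add, Multiset.add_cons]
    rw [e0, e1, e2, hΔ]
    exact hadd Δ₁ Δ₂ S hSc
  -- Alexandrov–Fenchel on the array
  have cAF : ∀ i j : ℕ, i + j + 2 ≤ m →
      c (i+2) j * c i (j+2) ≤ (c (i+1) (j+1)) ^ 2 := by
    intro i j hij
    set S := replicate i Δ₁ + (replicate j Δ₂ + (replicate (m - i - j - 2) Δ + t)) with hS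
    have hSc : S.card = n - 2 := by simp [hS, ht]; omega
    have e1 : c (i+2) j = V (Δ₁ ::ₘ Δ₁ ::ₘ S) := by
      have h1 : m - (i+2) - j = m - i - j - 2 := by omega
      simp only [hcdef, h1, hS, replicate_succ, Multiset.cons_add, Multiset.add_cons]
    have e2 : c i (j+2) = V (Δ₂ ::ₘ Δ₂ ::ₘ S) := by
      have h2 : m - i - (j+2) = m - i - j - 2 := by omega
      simp only [hcdef, h2, hS, replicate_succ, Multiset.cons_add, Multiset.add_cons]
    have e3 : c (i+1) (j+1) = V (Δ₁ ::ₘ Δ₂ ::ₘ S) := by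
      have h3 : m - (i+1) - (j+1) = m - i - j - 2 := by omega
      simp only [hcdef, h3, hS, replicate_succ, Multiset.cons_add, Multiset.add_cons]
      rw [Multiset.cons_swap]
    rw [e1, e2, e3]
    exact hAF Δ₁ Δ₂ S hSc
  -- edge monotonicity
  have edge2 : ∀ j, j ≤ m → c 0 m ≤ c 0 j := by
    have key : ∀ d, d ≤ m → c 0 m ≤ c 0 (m - d) := by
      intro d
      induction d with
      | zero => intro _; simp
      | succ d ih =>
        intro hd
        have h1 : (0:ℕ) + (m - d - 1) < m := by omega
        have := pascal 0 (m - d - 1) h1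
        have h2 : m - d - 1 + 1 = m - d := by omega
        rw [h2] at this
        have h3 : m - (d+1) = m - d - 1 := by omega
        rw [h3, this]
        have := hc0 1 (m - d - 1) (by omega)
        have := ih (by omega)
        linarith
    intro j hj
    have := key (m - j) (by omega)
    rwa [show m - (m - j) = j from by omega] at this
  have edge1 : ∀ i, i ≤ m → c m 0 ≤ c i 0 := by
    have key : ∀ d, d ≤ m → c m 0 ≤ c (m - d) 0 := by
      intro d
      induction d with
      | zero => intro _; simp
      | succ d ih =>
        intro hd
        have h1 : (m - d - 1) + 0 < m := by omega
        have := pascal (m - d - 1) 0 h1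
        have h2 : m - d - 1 + 1 = m - d := by omega
        rw [h2] at this
        have h3 : m - (d+1) = m - d - 1 := by omega
        rw [h3, this]
        have := hc0 (m - d - 1) 1 (by omega)
        have := ih (by omega)
        linarith
    intro i hi
    have := key (m - i) (by omega)
    rwa [show m - (m - i) = i from by omega] at this
  -- positivity of the whole array, assuming positivity of the two corners
  have diagpos : 0 < c 0 m → 0 < c m 0 → ∀ ℓ, ℓ ≤ m → ∀ i, i ≤ ℓ → 0 < c i (ℓ - i) := by
    intro h0 hm0 ℓ
    induction ℓ with
    | zero =>
      intro _ i hi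
      interval_cases i
      exact lt_of_lt_of_le h0 (edge2 0 (by omega))
    | succ ℓ ih =>
      intro hℓ i hi
      by_cases hi0 : i = 0
      · subst hi0
        exact lt_of_lt_of_le h0 (edge2 (ℓ+1) hℓ)
      by_cases hitop : i = ℓ + 1
      · subst hitop
        simpa using lt_of_lt_of_le hm0 (edge1 (ℓ+1) hℓ)
      have hi1 : 1 ≤ i := by omega
      have hil : i ≤ ℓ := by omega
      by_contra hcon
      have hz : c i (ℓ + 1 - i) = 0 :=
        le_antisymm (not_lt.mp hcon) (hc0 i (ℓ+1-i) (by omega))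
      have hz' : c i (ℓ - i + 1) = 0 := by
        rwa [show ℓ + 1 - i = ℓ - i + 1 from by omega] at hz
      have hA : 0 < c (i-1) (ℓ - i + 2) := by
        have hp := pascal (i-1) (ℓ - i + 1) (by omega)
        rw [show i - 1 + 1 = i from by omega] at hp
        have hApos := ih (by omega) (i-1) (by omega)
        rw [show ℓ - (i-1) = ℓ - i + 1 from by omega] at hApos
        have hn := hc0 i (ℓ - i + 1) (by omega)
        nlinarith [hc0 (i-1) (ℓ - i + 2) (by omega : (i-1) + (ℓ - i + 2) ≤ m)]
      have hB : 0 < c (i+1) (ℓ - i) := by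
        have hp := pascal i (ℓ - i) (by omega)
        have hBpos := ih (by omega) i hil
        nlinarith [hc0 (i+1) (ℓ - i) (by omega : (i+1) + (ℓ - i) ≤ m)]
      have hcaf := cAF (i-1) (ℓ - i) (by omega)
      rw [show i - 1 + 2 = i + 1 from by omega, show i - 1 + 1 = i from by omega] at hcaf
      rw [hz'] at hcaf
      nlinarith
  set a : ℕ → ℝ := fun k => c k (m - k) with hadef
  have aAF : ∀ q, 1 ≤ q → q + 1 ≤ m → a (q+1) * a (q-1) ≤ a q ^ 2 := by
    intro q hq1 hqm
    have h := cAF (q-1) (m-q-1) (by omega)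
    rw [show q - 1 + 2 = q + 1 from by omega, show q - 1 + 1 = q from by omega,
        show m - q - 1 + 2 = m - (q-1) from by omega,
        show m - q - 1 + 1 = m - q from by omega,
        show m - q - 1 = m - (q+1) from by omega] at h
    exact h
  -- now everything under corner positivity
  have apos : 0 < c 0 m → 0 < c m 0 → ∀ k, k ≤ m → 0 < a k := by
    intro h0 hm0 k hk
    exact diagpos h0 hm0 m le_rfl k hk
  have ratio : 0 < c 0 m → 0 < c m 0 →
      ∀ d p, p + d + 1 ≤ m → a p * a (p+d+1) ≤ a (p+1) * a (p+d) := by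
    intro h0 hm0 d
    induction d with
    | zero =>
      intro p _
      simp [mul_comm]
    | succ d ih =>
      intro p hpd
      have hq := aAF (p+d+1) (by omega) (by omega)
      rw [show p + d + 1 + 1 = p + d + 2 from by omega,
          show p + d + 1 - 1 = p + d from by omega] at hq
      have hih := ih p (by omega)
      have h1 : 0 < a (p+d) := apos h0 hm0 _ (by omega)
      have h2 : 0 < a (p+d+1) := apos h0 hm0 _ (by omega)
      have h3 : 0 < a p := apos h0 hm0 _ (by omega)
      have h4 : 0 < a (p+1) := apos h0 hm0 _ (by omega)
      have h5 : 0 < a (p+d+2) := apos h0 hm0 _ (by omega)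
      rw [show p + (d+1) + 1 = p + d + 2 from by omega,
          show p + (d+1) = p + d + 1 from by omega]
      have key : (a p * a (p+d+2)) * a (p+d) ≤ (a (p+1) * a (p+d+1)) * a (p+d) := by
        have e1 : a p * (a (p+d+2) * a (p+d)) ≤ a p * a (p+d+1) ^ 2 :=
          mul_le_mul_of_nonneg_left hq h3.le
        have e2 : (a p * a (p+d+1)) * a (p+d+1) ≤ (a (p+1) * a (p+d)) * a (p+d+1) :=
          mul_le_mul_of_nonneg_right hih h2.le
        nlinarith [e1, e2]
      exact le_of_mul_le_mul_right key h1
  have claimA : 0 < c 0 m → 0 < c m 0 → ∀ k j, 1 ≤ k → k + j ≤ m →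
      a (k+j) * a (k-1) ^ j ≤ a k ^ (j+1) := by
    intro h0 hm0 k j
    induction j with
    | zero => intro _ _; simp
    | succ j ih =>
      intro hk1 hkj
      have hr := ratio h0 hm0 (j+1) (k-1) (by omega)
      rw [show k - 1 + (j+1) + 1 = k + j + 1 from by omega,
          show k - 1 + 1 = k from by omega,
          show k - 1 + (j+1) = k + j from by omega] at hr
      have hkm1 : 0 ≤ a (k-1) := (apos h0 hm0 (k-1) (by omega)).le
      have hk0 : 0 ≤ a k := (apos h0 hm0 k (by omega)).le
      calc a (k+(j+1)) * a (k-1) ^ (j+1)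
          = (a (k-1) * a (k+j+1)) * a (k-1) ^ j := by
            rw [show k + (j+1) = k + j + 1 from by omega]; ring
        _ ≤ (a k * a (k+j)) * a (k-1) ^ j := by
            exact mul_le_mul_of_nonneg_right hr (by positivity)
        _ = a k * (a (k+j) * a (k-1) ^ j) := by ring
        _ ≤ a k * a k ^ (j+1) := mul_le_mul_of_nonneg_left (ih hk1 (by omega)) hk0
        _ = a k ^ (j+1+1) := by ring
  have claimB : 0 < c 0 m → 0 < c m 0 → ∀ k j, j ≤ k → k ≤ m →
      a (k-j) * a k ^ j ≤ a k * a (k-1) ^ j := by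
    intro h0 hm0 k j
    induction j with
    | zero => intro _ _; simp
    | succ j ih =>
      intro hjk hkm
      have hr := ratio h0 hm0 j (k-j-1) (by omega)
      rw [show k - j - 1 + j + 1 = k from by omega,
          show k - j - 1 + 1 = k - j from by omega,
          show k - j - 1 + j = k - 1 from by omega] at hr
      have hkm1 : 0 ≤ a (k-1) := (apos h0 hm0 (k-1) (by omega)).le
      have hk0 : 0 ≤ a k := (apos h0 hm0 k (by omega)).le
      calc a (k-(j+1)) * a k ^ (j+1)
          = (a (k-j-1) * a k) * a k ^ j := by
            rw [show k - (j+1) = k - j - 1 from by omega]; ring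
        _ ≤ (a (k-j) * a (k-1)) * a k ^ j := mul_le_mul_of_nonneg_right hr (by positivity)
        _ = a (k-1) * (a (k-j) * a k ^ j) := by ring
        _ ≤ a (k-1) * (a k * a (k-1) ^ j) := mul_le_mul_of_nonneg_left (ih (by omega) hkm) hkm1
        _ = a k * a (k-1) ^ (j+1) := by ring
  have powbound : 0 < c 0 m → 0 < c m 0 → ∀ k, 1 ≤ k → k + 1 ≤ m →
      a 0 ^ (m-k) * a m ^ k ≤ a k ^ m := by
    intro h0 hm0 k hk1 hkm
    have hA := claimA h0 hm0 k (m-k) hk1 (by omega)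
    rw [show k + (m-k) = m from by omega] at hA
    have hB := claimB h0 hm0 k k le_rfl (by omega)
    rw [show k - k = 0 from by omega] at hB
    have hkm1 : 0 ≤ a (k-1) := (apos h0 hm0 (k-1) (by omega)).le
    have hk0 : 0 < a k := apos h0 hm0 k (by omega)
    have ha0 : 0 ≤ a 0 := (apos h0 hm0 0 (by omega)).le
    have ham : 0 ≤ a m := (apos h0 hm0 m le_rfl).le
    -- raise hA to the k-th power, hB to the (m-k)-th power
    have hAk : a m ^ k * a (k-1) ^ ((m-k)*k) ≤ a k ^ ((m-k+1)*k) := by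
      have := pow_le_pow_left₀ (by positivity) hA k
      rwa [mul_pow, ← pow_mul, ← pow_mul] at this
    have hBk : a 0 ^ (m-k) * a k ^ (k*(m-k)) ≤ a k ^ (m-k) * a (k-1) ^ (k*(m-k)) := by
      have := pow_le_pow_left₀ (by positivity) hB (m-k)
      rwa [mul_pow, mul_pow, ← pow_mul, ← pow_mul] at this
    have key : (a 0 ^ (m-k) * a m ^ k) * a k ^ (k*(m-k)) ≤ a k ^ m * a k ^ (k*(m-k)) := by
      calc (a 0 ^ (m-k) * a m ^ k) * a k ^ (k*(m-k))
          = a m ^ k * (a 0 ^ (m-k) * a k ^ (k*(m-k))) := by ring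
        _ ≤ a m ^ k * (a k ^ (m-k) * a (k-1) ^ (k*(m-k))) :=
            mul_le_mul_of_nonneg_left hBk (by positivity)
        _ = a k ^ (m-k) * (a m ^ k * a (k-1) ^ ((m-k)*k)) := by
            rw [Nat.mul_comm k (m-k)]; ring
        _ ≤ a k ^ (m-k) * a k ^ ((m-k+1)*k) :=
            mul_le_mul_of_nonneg_left hAk (by positivity)
        _ = a k ^ (m-k+(m-k+1)*k) := by rw [← pow_add]
        _ = a k ^ m * a k ^ (k*(m-k)) := by
            rw [← pow_add]
            congr 1
            obtain ⟨u, rfl⟩ : ∃ u, m = u + k := ⟨m - k, by omega⟩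
            simp [Nat.add_sub_cancel]
            ring
    exact le_of_mul_le_mul_right key (by positivity)
  -- real m-th roots
  have hmR : (0:ℝ) < m := by positivity
  have hmrpos : (0:ℝ) < 1/m := by positivity
  have ha0' : 0 ≤ a 0 := hc0 0 (m-0) (by omega)
  have ham' : 0 ≤ a m := hc0 m (m-m) (by omega)
  set α : ℝ := a m ^ ((1:ℝ)/m) with hαdef
  set β : ℝ := a 0 ^ ((1:ℝ)/m) with hβdef
  have hα0 : 0 ≤ α := Real.rpow_nonneg ham' _
  have hβ0 : 0 ≤ β := Real.rpow_nonneg ha0' _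
  have hmul : (1:ℝ)/m * m = 1 := by field_simp
  have termwise : ∀ k, k ≤ m → α ^ k * β ^ (m-k) ≤ a k := by
    intro k hk
    by_cases hk0 : k = 0
    · subst hk0
      have : β ^ m = a 0 := by
        rw [hβdef, ← Real.rpow_natCast (a 0 ^ ((1:ℝ)/m)) m, ← Real.rpow_mul ha0',
            hmul, Real.rpow_one]
      simp [this]
    by_cases hkm : k = m
    · rw [hkm]
      have : α ^ m = a m := by
        rw [hαdef, ← Real.rpow_natCast (a m ^ ((1:ℝ)/m)) m, ← Real.rpow_mul ham',
            hmul, Real.rpow_one]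
      simp [this]
    -- interior
    have hak : 0 ≤ a k := hc0 k (m-k) (by omega)
    rcases eq_or_lt_of_le ha0' with h0z | h0p
    · have : β = 0 := by rw [hβdef, ← h0z, Real.zero_rpow (by positivity)]
      rw [this, zero_pow (by omega : m - k ≠ 0), mul_zero]
      exact hak
    rcases eq_or_lt_of_le ham' with hmz | hmp
    · have : α = 0 := by rw [hαdef, ← hmz, Real.zero_rpow (by positivity)]
      rw [this, zero_pow (by omega : k ≠ 0), zero_mul]
      exact hak
    have h0c : 0 < c 0 m := by
      have : a 0 = c 0 m := by rw [hadef]; simp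
      rwa [this] at h0p
    have hmc : 0 < c m 0 := by
      have : a m = c m 0 := by rw [hadef]; simp
      rwa [this] at hmp
    have hpb := powbound h0c hmc k (by omega) (by omega)
    have hakpos : 0 < a k := apos h0c hmc k hk
    have e1 : (a m ^ k) ^ ((1:ℝ)/m) = α ^ k := by
      rw [← Real.rpow_natCast (a m) k, ← Real.rpow_mul ham',
          mul_comm (k:ℝ) ((1:ℝ)/m), Real.rpow_mul ham', Real.rpow_natCast]
    have e2 : (a 0 ^ (m-k)) ^ ((1:ℝ)/m) = β ^ (m-k) := by
      rw [← Real.rpow_natCast (a 0) (m-k), ← Real.rpow_mul ha0',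
          mul_comm ((m-k : ℕ):ℝ) ((1:ℝ)/m), Real.rpow_mul ha0', Real.rpow_natCast]
    have e3 : (a k ^ m) ^ ((1:ℝ)/m) = a k := by
      rw [← Real.rpow_natCast (a k) m, ← Real.rpow_mul hakpos.le,
          mul_comm (m:ℝ) ((1:ℝ)/m), hmul, Real.rpow_one]
    calc α ^ k * β ^ (m-k)
        = (a m ^ k) ^ ((1:ℝ)/m) * (a 0 ^ (m-k)) ^ ((1:ℝ)/m) := by rw [e1, e2]
      _ = (a m ^ k * a 0 ^ (m-k)) ^ ((1:ℝ)/m) :=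
          (Real.mul_rpow (by positivity) (by positivity)).symm
      _ ≤ (a k ^ m) ^ ((1:ℝ)/m) := by
          apply Real.rpow_le_rpow (by positivity) _ hmrpos.le
          calc a m ^ k * a 0 ^ (m-k) = a 0 ^ (m-k) * a m ^ k := by ring
            _ ≤ a k ^ m := hpb
      _ = a k := e3
  -- 2D lower bound by downward induction on the number of Δ's
  have bound2 : ∀ d, d ≤ m → ∀ i j, i + j + d = m → α^i * β^j * (α+β)^d ≤ c i j := by
    intro d
    induction d with
    | zero =>
      intro _ i j hij
      have hj : j = m - i := by omega
      subst hj
      have := termwise i (by omega)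
      simpa using this
    | succ d ih =>
      intro hd i j hij
      have h1 := ih (by omega) (i+1) j (by omega)
      have h2 := ih (by omega) i (j+1) (by omega)
      rw [pascal i j (by omega)]
      calc α^i * β^j * (α+β)^(d+1)
          = α^(i+1) * β^j * (α+β)^d + α^i * β^(j+1) * (α+β)^d := by ring
        _ ≤ c (i+1) j + c i (j+1) := add_le_add h1 h2
  have hfinal : (α+β)^m ≤ c 0 0 := by
    have := bound2 m le_rfl 0 0 (by omega)
    simpa using this
  -- identify the three quantities in the goal
  have g1 : V (Multiset.replicate m Δ₁ + t) = a m := by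
    rw [hadef]
    show _ = c m (m - m)
    rw [hcdef]
    simp
  have g2 : V (Multiset.replicate m Δ₂ + t) = a 0 := by
    rw [hadef]
    show _ = c 0 (m - 0)
    rw [hcdef]
    simp
  have g3 : V (Multiset.replicate m (Δ₁ + Δ₂) + t) = c 0 0 := by
    rw [hcdef]
    simp [hΔ]
  rw [g1, g2, g3, ← hαdef, ← hβdef]
  have hc00 : 0 ≤ c 0 0 := hc0 0 0 (by omega)
  calc α + β = ((α+β)^m) ^ ((1:ℝ)/m) := by
        rw [← Real.rpow_natCast (α+β) m, ← Real.rpow_mul (by positivity),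
            mul_comm (m:ℝ) ((1:ℝ)/m), hmul, Real.rpow_one]
    _ ≤ (c 0 0) ^ ((1:ℝ)/m) := Real.rpow_le_rpow (by positivity) hfinal hmrpos.le
end

section
/- For nonzero Laurent polynomials P, Q over an integral domain, the Newton polytope of the product equals the Minkowski sum of the Newton polytopes: Δ(PQ) = Δ(P) + Δ(Q). -/
/-!
The inclusion `Δ(PQ) ⊆ Δ(P) + Δ(Q)` holds because every exponent of `PQ` is a sum of exponents of
`P` and `Q`. Conversely, `Δ(P) + Δ(Q)` is the convex hull of its vertices, and a vertex `v` is
written as `a + b` with `a ∈ supp P`, `b ∈ supp Q` in only one way: if also `v = a' + b'`, then `v`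
is the midpoint of `a' + b` and `a + b'`, both in `Δ(P) + Δ(Q)`. So the coefficient of `v` in `PQ`
is `P_a Q_b ≠ 0`.
-/

open Pointwise

/-- The Newton polytope of a Laurent polynomial in `n` variables (an element of the
monoid algebra of `Fin n →₀ ℤ`): the convex hull in `ℝⁿ` of its support. -/
noncomputable def newtonPolytope {R : Type*} [CommRing R] {n : ℕ}
    (P : AddMonoidAlgebra R (Fin n →₀ ℤ)) : Set (Fin n → ℝ) :=
  convexHull ℝ ((fun k : Fin n →₀ ℤ => fun i => (k i : ℝ)) '' ↑P.coeff.support)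

open Set

theorem eq_and_eq_of_add_mem_extremePoints_add {𝕜 E : Type*} [Field 𝕜] [LinearOrder 𝕜]
    [IsStrictOrderedRing 𝕜] [AddCommGroup E] [Module 𝕜 E] {A B : Set E} {a a' b b' : E}
    (ha : a ∈ A) (ha' : a' ∈ A) (hb : b ∈ B) (hb' : b' ∈ B)
    (hext : a + b ∈ (A + B).extremePoints 𝕜) (hsum : a' + b' = a + b) :
    a' = a ∧ b' = b := by
  have hmid : a + b ∈ openSegment 𝕜 (a' + b) (a + b') :=
    ⟨1 / 2, 1 / 2, by norm_num, by norm_num, by norm_num, by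
      linear_combination (norm := module) (1 / 2 : 𝕜) • hsum⟩
  obtain ⟨h₁, h₂⟩ := (mem_extremePoints.1 hext).2 _ (add_mem_add ha' hb) _ (add_mem_add ha hb') hmid
  exact ⟨add_right_cancel h₁, add_left_cancel h₂⟩

theorem UniqueAdd.of_map_add_mem_extremePoints {𝕜 M E : Type*} [Field 𝕜] [LinearOrder 𝕜]
    [IsStrictOrderedRing 𝕜] [AddCommGroup E] [Module 𝕜 E] [AddCommMonoid M]
    {φ : M →+ E} (hφ : Function.Injective φ) {A B : Finset M} {a b : M}
    (ha : a ∈ A) (hb : b ∈ B) (hext : φ (a + b) ∈ (φ '' A + φ '' B).extremePoints 𝕜) :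
    UniqueAdd A B a b := by
  intro a' b' ha' hb' hsum
  rw [map_add] at hext
  have := eq_and_eq_of_add_mem_extremePoints_add (mem_image_of_mem φ ha)
    (mem_image_of_mem φ ha') (mem_image_of_mem φ hb) (mem_image_of_mem φ hb') hext
    (by rw [← map_add, ← map_add, hsum])
  exact this.imp (hφ ·) (hφ ·)

theorem AddMonoidAlgebra.add_mem_support_coeff_mul_of_uniqueAdd {R M : Type*} [Semiring R]
    [NoZeroDivisors R] [Add M] {P Q : AddMonoidAlgebra R M} {a b : M}
    (ha : a ∈ P.coeff.support) (hb : b ∈ Q.coeff.support)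
    (h : UniqueAdd P.coeff.support Q.coeff.support a b) :
    a + b ∈ (P * Q).coeff.support := by
  rw [Finsupp.mem_support_iff, coeff_mul_add_of_uniqueAdd h]
  exact mul_ne_zero (Finsupp.mem_support_iff.1 ha) (Finsupp.mem_support_iff.1 hb)

section KreinMilman

variable {E : Type*} [AddCommGroup E] [Module ℝ E] [TopologicalSpace E] [T2Space E]
  [IsTopologicalAddGroup E] [ContinuousSMul ℝ E] [LocallyConvexSpace ℝ E]

theorem Set.Finite.convexHull_extremePoints_convexHull {s : Set E} (hs : s.Finite) :
    convexHull ℝ ((convexHull ℝ s).extremePoints ℝ) = convexHull ℝ s := by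
  have hclosed : IsClosed (convexHull ℝ ((convexHull ℝ s).extremePoints ℝ)) :=
    ((hs.subset extremePoints_convexHull_subset).isCompact_convexHull ℝ).isClosed
  rw [← hclosed.closure_eq]
  exact closure_convexHull_extremePoints (hs.isCompact_convexHull ℝ) (convex_convexHull ℝ s)

theorem AddMonoidAlgebra.convexHull_image_support_coeff_mul {R M : Type*} [Semiring R]
    [NoZeroDivisors R] [AddCommMonoid M] {φ : M →+ E} (hφ : Function.Injective φ)
    (P Q : AddMonoidAlgebra R M) :
    convexHull ℝ (φ '' (P * Q).coeff.support) =
      convexHull ℝ (φ '' P.coeff.support) + convexHull ℝ (φ '' Q.coeff.support) := by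
  classical
  have hsum : φ '' P.coeff.support + φ '' Q.coeff.support =
      φ '' ↑(P.coeff.support + Q.coeff.support) := by
    rw [Finset.coe_add, image_add]
  rw [← convexHull_add, hsum]
  refine (convexHull_mono (image_mono (support_coeff_mul_subset P Q))).antisymm ?_
  rw [← (Finset.finite_toSet _ |>.image φ).convexHull_extremePoints_convexHull]
  refine convexHull_min (fun v hv ↦ subset_convexHull ℝ _ ?_) (convex_convexHull ℝ _)
  obtain ⟨c, hc, rfl⟩ := extremePoints_convexHull_subset hv
  obtain ⟨a, ha, b, hb, rfl⟩ := Finset.mem_add.1 hc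
  have hext : φ (a + b) ∈ (φ '' P.coeff.support + φ '' Q.coeff.support).extremePoints ℝ := by
    rw [hsum]
    exact inter_extremePoints_subset_extremePoints_of_subset (subset_convexHull ℝ _)
      ⟨mem_image_of_mem φ hc, hv⟩
  exact mem_image_of_mem φ <| add_mem_support_coeff_mul_of_uniqueAdd ha hb <|
    .of_map_add_mem_extremePoints hφ ha hb hext

end KreinMilman

theorem newtonPolytope_mul_general
    (R : Type*) [CommRing R] [IsDomain R] (n : ℕ)
    (P Q : AddMonoidAlgebra R (Fin n →₀ ℤ)) :
    newtonPolytope (P * Q) = newtonPolytope P + newtonPolytope Q := by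
  let φ : (Fin n →₀ ℤ) →+ (Fin n → ℝ) :=
    ((Int.castAddHom ℝ).compLeft (Fin n)).comp (Finsupp.coeFnAddHom)
  have hφ : Function.Injective φ :=
    (Int.cast_injective.comp_left).comp DFunLike.coe_injective
  exact AddMonoidAlgebra.convexHull_image_support_coeff_mul hφ P Q

/-- For nonzero Laurent polynomials `P`, `Q` over an integral domain,
the Newton polytope of the product is the Minkowski sum of the Newton polytopes:
`Δ(PQ) = Δ(P) + Δ(Q)`. -/
theorem newtonPolytope_mul
    (R : Type*) [CommRing R] [IsDomain R] (n : ℕ)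
    (P Q : AddMonoidAlgebra R (Fin n →₀ ℤ)) (hP : P ≠ 0) (hQ : Q ≠ 0) :
    newtonPolytope (P * Q) = newtonPolytope P + newtonPolytope Q :=
  newtonPolytope_mul_general R n P Q
end

section
/- Let L, M be nonzero finite-dimensional subspaces of the function field of a smooth complete curve X, and for a point a let ord_a(L) = min over nonzero f ∈ L of ord_a(f). Then ord_a(LM) = ord_a(L) + ord_a(M), where LM is the span of products. -/
/-!
A product of minimizers `f ∈ L`, `g ∈ M` attains `c₁ + c₂` because `v (f * g) = v f + v g`.
Conversely, every element of `L * M` is a sum of products `f * g`, each of valuation at least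
`c₁ + c₂`, and the ultrametric inequality carries this bound over to the sum.
-/

namespace AddValuation

variable {R A Γ : Type*} [CommSemiring R] [Ring A] [Algebra R A]
  [LinearOrderedAddCommMonoidWithTop Γ] (v : AddValuation A Γ)

theorem le_of_mem_lowerBounds_ne_zero {L : Submodule R A} {c : Γ}
    (hc : c ∈ lowerBounds {x | ∃ f ∈ L, f ≠ 0 ∧ v f = x}) {f : A} (hf : f ∈ L) :
    c ≤ v f := by
  rcases eq_or_ne f 0 with rfl | hf0
  · simp
  · exact hc ⟨f, hf, hf0, rfl⟩

theorem add_le_of_mem_mul {L M : Submodule R A} {a b : Γ}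
    (hL : ∀ f ∈ L, a ≤ v f) (hM : ∀ g ∈ M, b ≤ v g) {h : A} (hh : h ∈ L * M) :
    a + b ≤ v h := by
  refine Submodule.mul_induction_on hh (fun f hf g hg => ?_) fun x y hx hy => ?_
  · exact v.map_mul f g ▸ add_le_add (hL f hf) (hM g hg)
  · exact (le_min hx hy).trans (v.map_add x y)

end AddValuation

theorem ord_mul_subspaces_general
    (k K : Type*) [Field k] [Field K] [Algebra k K]
    (v : AddValuation K (WithTop ℤ))
    (L M : Submodule k K)
    (c₁ c₂ : WithTop ℤ)
    (hc₁ : IsLeast {x : WithTop ℤ | ∃ f ∈ L, f ≠ 0 ∧ v f = x} c₁)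
    (hc₂ : IsLeast {x : WithTop ℤ | ∃ g ∈ M, g ≠ 0 ∧ v g = x} c₂) :
    IsLeast {x : WithTop ℤ | ∃ h ∈ L * M, h ≠ 0 ∧ v h = x} (c₁ + c₂) := by
  obtain ⟨⟨f, hfL, hf0, rfl⟩, hlb₁⟩ := hc₁
  obtain ⟨⟨g, hgM, hg0, rfl⟩, hlb₂⟩ := hc₂
  refine ⟨⟨f * g, Submodule.mul_mem_mul hfL hgM, mul_ne_zero hf0 hg0, v.map_mul f g⟩, ?_⟩
  rintro _ ⟨h, hh, -, rfl⟩
  exact v.add_le_of_mem_mul (fun _ => v.le_of_mem_lowerBounds_ne_zero hlb₁)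
    (fun _ => v.le_of_mem_lowerBounds_ne_zero hlb₂) hh

/-- (Valuation-theoretic form, which suffices by the context.) Let `v` be a
discrete (`ℤ ∪ {∞}`-valued) additive valuation on a field `K`, trivial on the infinite
constant field `k`. For nonzero finite-dimensional `k`-subspaces `L`, `M` of `K`, the
minimum of `v` over the nonzero elements of `L * M` equals the sum of the minima over
the nonzero elements of `L` and of `M`: `ord(LM) = ord(L) + ord(M)`. -/
theorem ord_mul_subspaces
    (k K : Type*) [Field k] [Infinite k] [Field K] [Algebra k K]
    (v : AddValuation K (WithTop ℤ))
    (hv : ∀ c : k, c ≠ 0 → v (algebraMap k K c) = 0)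
    (L M : Submodule k K) (hL : L ≠ ⊥) (hM : M ≠ ⊥)
    (hLfin : FiniteDimensional k L) (hMfin : FiniteDimensional k M)
    (c₁ c₂ : WithTop ℤ)
    (hc₁ : IsLeast {x : WithTop ℤ | ∃ f ∈ L, f ≠ 0 ∧ v f = x} c₁)
    (hc₂ : IsLeast {x : WithTop ℤ | ∃ g ∈ M, g ≠ 0 ∧ v g = x} c₂) :
    IsLeast {x : WithTop ℤ | ∃ h ∈ L * M, h ≠ 0 ∧ v h = x} (c₁ + c₂) :=
  ord_mul_subspaces_general k K v L M c₁ c₂ hc₁ hc₂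
end

section
/- Let L be a nonzero finite-dimensional k-subspace of a field extension K of k, and let L̄ denote the set of all elements f ∈ K satisfying an equation fᵐ + a₁f^{m−1} + ⋯ + a_m = 0 with m > 0 and a_i ∈ Lⁱ for each i. Then L̄ is a k-vector subspace of K containing L. -/
/-!
Identify `f ∈ K` with `f X ∈ K[X]` and let `R = ⨁ Lⁱ Xⁱ ⊆ K[X]` be the Rees algebra of
`L`. A monic equation of degree `m` for `f X` over `R` has `X^m`-coefficient
`f^m + a₁ f^{m-1} + ⋯ + a_m` with `a_i ∈ Lⁱ`, and conversely such an equation for `f` is the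
`X^m`-coefficient of a monic equation for `f X` over `R`. Hence `L̄` is the preimage of the
integral closure of `R` in `K[X]` under the linear map `f ↦ f X`, so it is a subspace, and it
contains `L` because `L X ⊆ R`.
-/

open Polynomial

theorem Finset.sum_range_succ_eq_add_sum_Icc {M : Type*} [AddCommMonoid M] (g : ℕ → M)
    (m : ℕ) :
    ∑ i ∈ Finset.range (m + 1), g i = g 0 + ∑ i ∈ Finset.Icc 1 m, g i := by
  rw [Finset.range_eq_Ico, Finset.sum_eq_sum_Ico_succ_bot (Nat.succ_pos m), zero_add,
    Nat.succ_eq_add_one, Finset.Ico_add_one_right_eq_Icc]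

theorem Polynomial.coeff_eval_C_mul_X {A : Type*} [CommSemiring A] {Q : A[X][X]} {n : ℕ}
    (hn : Q.natDegree ≤ n) (f : A) :
    (Q.eval (C f * X)).coeff n =
      ∑ i ∈ Finset.range (n + 1), (Q.coeff (n - i)).coeff i * f ^ (n - i) := by
  rw [eval_eq_sum_range' (Nat.lt_succ_of_le hn), finsetSum_coeff,
    ← Finset.sum_range_reflect]
  refine Finset.sum_congr rfl fun j hj => ?_
  have hj : j ≤ n := Nat.lt_succ_iff.mp (Finset.mem_range.mp hj)
  rw [Nat.succ_sub_one, mul_pow, ← C_pow, ← mul_assoc, coeff_mul_X_pow',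
    if_pos (Nat.sub_le n j), coeff_mul_C, Nat.sub_sub_self hj]

theorem Polynomial.isIntegral_of_monic_of_mem_lifts {R B : Type*} [CommRing R] [CommRing B]
    [Algebra R B] {S : Subalgebra R B} {Q : B[X]} (hQ : Q.Monic)
    (hlifts : Q ∈ lifts (algebraMap S B)) {x : B} (hx : Q.eval x = 0) : IsIntegral S x := by
  obtain ⟨q, rfl, -, hq⟩ := lifts_and_natDegree_eq_and_monic hlifts hQ
  exact ⟨q, hq, by rwa [eval₂_eq_eval_map]⟩

namespace Submodule

variable {R A : Type*} [CommRing R] [CommRing A] [Algebra R A] (L : Submodule R A)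

def reesAlgebra : Subalgebra R A[X] where
  carrier := {p | ∀ i, p.coeff i ∈ L ^ i}
  mul_mem' hp hq i := by
    rw [coeff_mul]
    refine sum_mem fun ⟨j, l⟩ hjl => ?_
    rw [← Finset.HasAntidiagonal.mem_antidiagonal.mp hjl, pow_add]
    exact mul_mem_mul (hp j) (hq l)
  add_mem' hp hq i := by
    rw [coeff_add]
    exact add_mem (hp i) (hq i)
  algebraMap_mem' r i := by
    rw [Polynomial.algebraMap_apply, coeff_C]
    split_ifs with h
    · subst h
      exact mem_one.mpr ⟨r, rfl⟩
    · exact zero_mem _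

noncomputable def completion : Submodule R A :=
  (Subalgebra.toSubmodule ((integralClosure L.reesAlgebra A[X]).restrictScalars R)).comap
    ((monomial 1).restrictScalars R)

variable {L}

theorem C_mul_X_pow_mem_reesAlgebra {c : A} {n : ℕ} (hc : c ∈ L ^ n) :
    C c * X ^ n ∈ L.reesAlgebra := fun i => by
  rw [coeff_C_mul_X_pow]
  split_ifs with h
  · exact h ▸ hc
  · exact zero_mem _

theorem mem_completion_iff_isIntegral {f : A} :
    f ∈ L.completion ↔ IsIntegral L.reesAlgebra (C f * X) := by
  rw [C_mul_X_eq_monomial]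
  rfl

theorem le_completion : L ≤ L.completion := fun f hf =>
  have hfX : C f * X ∈ L.reesAlgebra := by
    simpa using C_mul_X_pow_mem_reesAlgebra (n := 1) (by simpa using hf)
  mem_completion_iff_isIntegral.mpr (isIntegral_algebraMap (x := (⟨_, hfX⟩ : L.reesAlgebra)))

theorem exists_pow_add_sum_eq_zero_of_isIntegral [Nontrivial A] {f : A}
    (h : IsIntegral L.reesAlgebra (C f * X)) :
    ∃ m : ℕ, 0 < m ∧ ∃ a : ℕ → A, (∀ i ∈ Finset.Icc 1 m, a i ∈ L ^ i) ∧
      f ^ m + ∑ i ∈ Finset.Icc 1 m, a i * f ^ (m - i) = 0 := by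
  obtain ⟨q, hq, hqf⟩ := h
  set m := q.natDegree
  have hm : 0 < m := by
    refine Nat.pos_of_ne_zero fun h0 => ?_
    rw [hq.natDegree_eq_zero.mp h0, eval₂_one] at hqf
    exact one_ne_zero hqf
  refine ⟨m, hm, fun i => (q.coeff (m - i) : A[X]).coeff i,
    fun i _ => (q.coeff (m - i)).2 i, ?_⟩
  have hcoeff :=
    coeff_eval_C_mul_X (natDegree_map_le (f := algebraMap L.reesAlgebra A[X]) (p := q)) f
  rw [← eval₂_eq_eval_map, hqf, coeff_zero, Finset.sum_range_succ_eq_add_sum_Icc] at hcoeff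
  simpa [hq.coeff_natDegree] using hcoeff.symm

theorem isIntegral_C_mul_X_of_pow_add_sum_eq_zero {f : A} {m : ℕ} (hm : 0 < m) {a : ℕ → A}
    (ha : ∀ i ∈ Finset.Icc 1 m, a i ∈ L ^ i)
    (heq : f ^ m + ∑ i ∈ Finset.Icc 1 m, a i * f ^ (m - i) = 0) :
    IsIntegral L.reesAlgebra (C f * X) := by
  let Q : A[X][X] := X ^ m + ∑ i ∈ Finset.Icc 1 m, C (C (a i) * X ^ i) * X ^ (m - i)
  have hlifts : Q ∈ lifts (algebraMap L.reesAlgebra A[X]) := by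
    refine add_mem (X_pow_mem_lifts _ _) (sum_mem fun i hi => mul_mem ?_ (X_pow_mem_lifts _ _))
    exact C_mem_lifts _ (⟨_, C_mul_X_pow_mem_reesAlgebra (ha i hi)⟩ : L.reesAlgebra)
  have hmonic : Q.Monic := by
    refine monic_X_pow_add <| (degree_sum_le _ _).trans_lt <|
      (Finset.sup_lt_iff (WithBot.bot_lt_coe m)).2 fun i hi => ?_
    exact (degree_C_mul_X_pow_le _ _).trans_lt
      (WithBot.coe_lt_coe.2 (Nat.sub_lt hm (Finset.mem_Icc.1 hi).1))
  refine isIntegral_of_monic_of_mem_lifts hmonic hlifts ?_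
  have hterm : ∀ i ∈ Finset.Icc 1 m,
      C (a i) * X ^ i * (C f * X) ^ (m - i) = C (a i * f ^ (m - i)) * X ^ m := by
    intro i hi
    rw [mul_pow, ← C_pow, C_mul, ← pow_sub_mul_pow X (Finset.mem_Icc.1 hi).2]
    ring
  simp only [Q, eval_add, eval_pow, eval_X, eval_finsetSum, eval_mul, eval_C]
  rw [Finset.sum_congr rfl hterm, mul_pow, ← C_pow, ← Finset.sum_mul, ← map_sum, ← add_mul,
    ← C_add, heq, C_0, zero_mul]

theorem mem_completion_iff [Nontrivial A] {f : A} :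
    f ∈ L.completion ↔ ∃ m : ℕ, 0 < m ∧ ∃ a : ℕ → A,
      (∀ i ∈ Finset.Icc 1 m, a i ∈ L ^ i) ∧
      f ^ m + ∑ i ∈ Finset.Icc 1 m, a i * f ^ (m - i) = 0 := by
  rw [mem_completion_iff_isIntegral]
  exact ⟨exists_pow_add_sum_eq_zero_of_isIntegral,
    fun ⟨_, hm, _, ha, heq⟩ => isIntegral_C_mul_X_of_pow_add_sum_eq_zero hm ha heq⟩

end Submodule

theorem completion_is_subspace_general
    (k K : Type*) [Field k] [Field K] [Algebra k K]
    (L : Submodule k K) :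
    ∃ S : Submodule k K,
      (S : Set K) = {f : K | ∃ m : ℕ, 0 < m ∧ ∃ a : ℕ → K,
        (∀ i ∈ Finset.Icc 1 m, a i ∈ L ^ i) ∧
        f ^ m + ∑ i ∈ Finset.Icc 1 m, a i * f ^ (m - i) = 0} ∧
      L ≤ S :=
  ⟨L.completion, Set.ext fun _ => Submodule.mem_completion_iff, Submodule.le_completion⟩

/-- Let `L` be a nonzero finite-dimensional `k`-subspace of a field
extension `K` of `k`, and let `L̄` be the set of `f ∈ K` satisfying an equation
`fᵐ + a₁ f^{m-1} + ⋯ + a_m = 0` with `m > 0` and `a_i ∈ Lⁱ`. Then `L̄` is a `k`-vector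
subspace of `K` containing `L`. -/
theorem completion_is_subspace
    (k K : Type*) [Field k] [Field K] [Algebra k K]
    (L : Submodule k K) (hL : L ≠ ⊥) (hfin : FiniteDimensional k L) :
    ∃ S : Submodule k K,
      (S : Set K) = {f : K | ∃ m : ℕ, 0 < m ∧ ∃ a : ℕ → K,
        (∀ i ∈ Finset.Icc 1 m, a i ∈ L ^ i) ∧
        f ^ m + ∑ i ∈ Finset.Icc 1 m, a i * f ^ (m - i) = 0} ∧
      L ≤ S :=
  completion_is_subspace_general k K L
end

section
/- Let K be a field extension of k and L, M nonzero finite-dimensional k-subspaces of K. If L ∼ M in the Grothendieck sense (there exists a nonzero finite-dimensional subspace N with LN = MN), then every element of M is integral over L, i.e. M ⊆ L̄. -/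
/-!
Determinant trick. Let `n₁, …, n_d` be a basis of `N`. For `g ∈ M` each `g nⱼ` lies in
`MN = LN`, so `g nⱼ = ∑ᵢ cⱼᵢ nᵢ` with `cⱼᵢ ∈ L`. Thus `g` is an eigenvalue of the matrix
`C = (cⱼᵢ)` with the nonzero eigenvector `(nᵢ)`, hence a root of its characteristic
polynomial. The coefficient of `X^(d-i)` in that polynomial is a homogeneous form of degree
`i` in the entries of `C`, so it lies in `Lⁱ`.
-/

open Polynomial Matrix

theorem Submodule.prod_pow_mem_pow_sum {R A σ : Type*} [CommSemiring R] [CommSemiring A]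
    [Algebra R A] (L : Submodule R A) (s : Finset σ) (v : σ → A) (e : σ → ℕ)
    (hv : ∀ j ∈ s, v j ∈ L) : ∏ j ∈ s, v j ^ e j ∈ L ^ ∑ j ∈ s, e j := by
  classical
  induction s using Finset.induction with
  | empty => simpa using (one_le (P := (1 : Submodule R A))).mp le_rfl
  | insert a s ha ih =>
    rw [Finset.prod_insert ha, Finset.sum_insert ha, pow_add]
    exact mul_mem_mul (pow_mem_pow _ (hv a (s.mem_insert_self a)) _)
      (ih fun j hj => hv j (Finset.mem_insert_of_mem hj))

theorem MvPolynomial.IsHomogeneous.aeval_mem_pow {R A σ : Type*} [CommSemiring R]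
    [CommSemiring A] [Algebra R A] {P : MvPolynomial σ R} {n : ℕ} (hP : P.IsHomogeneous n)
    (L : Submodule R A) {v : σ → A} (hv : ∀ s, v s ∈ L) : MvPolynomial.aeval v P ∈ L ^ n := by
  rw [MvPolynomial.aeval_def, MvPolynomial.eval₂_eq]
  refine Submodule.sum_mem _ fun d hd => ?_
  rw [← Algebra.smul_def, hP.degree_eq_sum_deg_support hd]
  exact Submodule.smul_mem _ _ (L.prod_pow_mem_pow_sum _ _ _ fun j _ => hv j)

theorem Matrix.coeff_charpoly_mem_pow {R A n : Type*} [CommRing R] [CommRing A] [Algebra R A]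
    [Fintype n] [DecidableEq n] (L : Submodule R A) {M : Matrix n n A} (hM : ∀ i j, M i j ∈ L)
    {i j : ℕ} (hij : i + j = Fintype.card n) : M.charpoly.coeff i ∈ L ^ j := by
  have := (charpoly.univ_coeff_isHomogeneous R n i j hij).aeval_mem_pow L
    (v := fun p : n × n => M p.1 p.2) fun p => hM p.1 p.2
  rwa [MvPolynomial.aeval_def, ← MvPolynomial.coe_eval₂Hom, charpoly.univ_coeff_eval₂Hom] at this

theorem Matrix.eval_charpoly_eq_zero_of_mulVec_eq_smul {A n : Type*} [CommRing A] [IsDomain A]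
    [Fintype n] [DecidableEq n] {M : Matrix n n A} {v : n → A} {t : A} (hv : v ≠ 0)
    (h : M *ᵥ v = t • v) : M.charpoly.eval t = 0 := by
  rw [eval_charpoly, ← exists_mulVec_eq_zero_iff]
  refine ⟨v, hv, ?_⟩
  ext i
  simp [sub_mulVec, h]

theorem Polynomial.Monic.eval_eq_pow_add_sum_Icc {R : Type*} [CommSemiring R] {p : R[X]}
    (hp : p.Monic) (x : R) :
    p.eval x = x ^ p.natDegree +
      ∑ i ∈ Finset.Icc 1 p.natDegree, p.coeff (p.natDegree - i) * x ^ (p.natDegree - i) := by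
  rw [eval_eq_sum_range, Finset.sum_range_succ, hp.coeff_natDegree, one_mul, add_comm]
  congr 1
  refine Finset.sum_nbij' (p.natDegree - ·) (p.natDegree - ·) ?_ ?_ ?_ ?_ fun j hj => ?_
  any_goals intro j hj; simp only [Finset.mem_range, Finset.mem_Icc] at hj ⊢; omega
  rw [Nat.sub_sub_self (Finset.mem_range.mp hj).le]

theorem Submodule.exists_sum_mul_eq_of_mem_mul_span_range {R A ι : Type*} [CommSemiring R]
    [Semiring A] [Algebra R A] [Fintype ι] {L : Submodule R A} {v : ι → A} {x : A}
    (hx : x ∈ L * span R (Set.range v)) : ∃ c : ι → A, (∀ i, c i ∈ L) ∧ ∑ i, c i * v i = x := by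
  rw [span_range_eq_iSup, mul_iSup,
    show (⨆ i, L * span R {v i}) = ⨆ i ∈ Finset.univ, L * span R {v i} by simp,
    mem_iSup_finset_iff_exists_sum] at hx
  obtain ⟨μ, rfl⟩ := hx
  choose c hc using fun i => mem_mul_span_singleton.mp (μ i).2
  exact ⟨c, fun i => (hc i).1, Finset.sum_congr rfl fun i _ => (hc i).2⟩

theorem Submodule.exists_monic_coeff_mem_pow_eval_eq_zero_of_mul_mem_mul {R A : Type*}
    [CommRing R] [CommRing A] [IsDomain A] [Algebra R A] {L N : Submodule R A}
    [Module.Free R N] [Module.Finite R N] (hN : N ≠ ⊥) {g : A} (hg : ∀ y ∈ N, g * y ∈ L * N) :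
    ∃ p : A[X], p.Monic ∧ 0 < p.natDegree ∧ (∀ i, p.coeff i ∈ L ^ (p.natDegree - i)) ∧
      p.eval g = 0 := by
  classical
  have : Nontrivial N := nontrivial_iff_ne_bot.mpr hN
  have : Nontrivial R := Module.nontrivial R N
  let ι := Module.Free.ChooseBasisIndex R N
  let b : Module.Basis ι R N := Module.Free.chooseBasis R N
  let v : ι → A := fun i => b i
  have hspan : span R (Set.range v) = N := by
    rw [show v = N.subtype ∘ b from rfl, Set.range_comp, span_image, b.span_eq, map_top,
      range_subtype]
  have hv : v ≠ 0 := fun h => b.ne_zero b.index_nonempty.some (Subtype.ext (congrFun h _))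
  choose c hcL hc using fun j =>
    exists_sum_mul_eq_of_mem_mul_span_range (by rw [hspan]; exact hg _ (b j).2)
  have hmulVec : Matrix.of c *ᵥ v = g • v := funext fun j => hc j
  have hdeg : (Matrix.of c).charpoly.natDegree = Fintype.card ι := charpoly_natDegree_eq_dim _
  refine ⟨_, charpoly_monic _, hdeg ▸ Fintype.card_pos, fun i => ?_,
    eval_charpoly_eq_zero_of_mulVec_eq_smul hv hmulVec⟩
  rcases le_or_gt i (Fintype.card ι) with hi | hi
  · exact hdeg ▸ coeff_charpoly_mem_pow L hcL (Nat.add_sub_cancel' hi)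
  · rw [coeff_eq_zero_of_natDegree_lt (hdeg ▸ hi)]
    exact zero_mem _

theorem groth_equiv_implies_integral_general
    (k K : Type*) [Field k] [Field K] [Algebra k K]
    (L M : Submodule k K)
    (h : ∃ N : Submodule k K, N ≠ ⊥ ∧ FiniteDimensional k N ∧ L * N = M * N) :
    ∀ g ∈ M, ∃ m : ℕ, 0 < m ∧ ∃ a : ℕ → K,
      (∀ i ∈ Finset.Icc 1 m, a i ∈ L ^ i) ∧
      g ^ m + ∑ i ∈ Finset.Icc 1 m, a i * g ^ (m - i) = 0 := by
  obtain ⟨N, hN, hNfin, hLN⟩ := h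
  intro g hg
  obtain ⟨p, hp, hdeg, hcoeff, hroot⟩ :=
    Submodule.exists_monic_coeff_mem_pow_eval_eq_zero_of_mul_mem_mul hN
      fun y hy => hLN ▸ Submodule.mul_mem_mul hg hy
  refine ⟨p.natDegree, hdeg, fun i => p.coeff (p.natDegree - i), fun i hi => ?_,
    (hp.eval_eq_pow_add_sum_Icc g).symm.trans hroot⟩
  have := hcoeff (p.natDegree - i)
  rwa [Nat.sub_sub_self (Finset.mem_Icc.mp hi).2] at this

/-- Let `L`, `M` be nonzero finite-dimensional `k`-subspaces of a field
extension `K` of `k`. If `L ∼ M` in the Grothendieck sense (`LN = MN` for some nonzero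
finite-dimensional subspace `N`), then every element of `M` is integral over `L`:
it satisfies `gᵐ + a₁ g^{m-1} + ⋯ + a_m = 0` with `m > 0` and `a_i ∈ Lⁱ`. -/
theorem groth_equiv_implies_integral
    (k K : Type*) [Field k] [Field K] [Algebra k K]
    (L M : Submodule k K) (hL : L ≠ ⊥) (hM : M ≠ ⊥)
    (hLfin : FiniteDimensional k L) (hMfin : FiniteDimensional k M)
    (h : ∃ N : Submodule k K, N ≠ ⊥ ∧ FiniteDimensional k N ∧ L * N = M * N) :
    ∀ g ∈ M, ∃ m : ℕ, 0 < m ∧ ∃ a : ℕ → K,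
      (∀ i ∈ Finset.Icc 1 m, a i ∈ L ^ i) ∧
      g ^ m + ∑ i ∈ Finset.Icc 1 m, a i * g ^ (m - i) = 0 :=
  groth_equiv_implies_integral_general k K L M h
end
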